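/- Let V ∈ ℂ^{L×T} with V Vᴴ invertible, and let C = V Vᴴ − I. For the RZF precoder W' = Vᴴ(VVᴴ + λI)⁻¹, if ‖C‖ = O(λ) as λ → 0, then V W' = (1 − λ) I + O(λ²). -/

import Mathlib

set_option maxHeartbeats 1000000

open Matrix

section Aux

attribute [local instance] Matrix.linftyOpNormedRing Matrix.linftyOpNormedAlgebra

variable {L T : ℕ}

lemma one_norm_le : ‖(1 : Matrix (Fin L) (Fin L) ℂ)‖ ≤ 1 := by
  rw [Matrix.linfty_opNorm_def]
  rw [show ((1:ℝ) ) = ((1 : NNReal) : ℝ) by norm_num]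
  rw [NNReal.coe_le_coe]
  apply Finset.sup_le
  intro i _
  rw [show (1 : NNReal) = ∑ j, if i = j then 1 else 0 by simp]
  apply le_of_eq
  apply Finset.sum_congr rfl
  intro j _
  by_cases h : i = j <;> simp [Matrix.one_apply, h]

lemma linfty_le_of_entries (A : Matrix (Fin L) (Fin L) ℂ) {r : ℝ} (hr : 0 ≤ r)
    (h : ∀ i j, ‖A i j‖ ≤ r) : ‖A‖ ≤ L * r := by
  rw [Matrix.linfty_opNorm_def]
  have : ((L : ℝ) * r) = (((L : NNReal) * ⟨r, hr⟩ : NNReal) : ℝ) := by push_cast; rfl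
  rw [this, NNReal.coe_le_coe]
  apply Finset.sup_le
  intro i _
  have step : ∑ j, ‖A i j‖₊ ≤ ∑ _j : Fin L, (⟨r, hr⟩ : NNReal) := by
    apply Finset.sum_le_sum; intro j _
    exact h i j
  refine step.trans (le_of_eq ?_)
  simp [mul_comm]
  rfl

lemma entry_le_linfty (A : Matrix (Fin L) (Fin L) ℂ) (i j : Fin L) : ‖A i j‖ ≤ ‖A‖ := by
  rw [Matrix.linfty_opNorm_def, ← NNReal.coe_mk ‖A i j‖ (norm_nonneg _), NNReal.coe_le_coe]
  exact (Finset.single_le_sum (f := fun j' => ‖A i j'‖₊) (fun _ _ => zero_le) (Finset.mem_univ j)).trans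
    (Finset.le_sup (f := fun i => ∑ j', ‖A i j'‖₊) (Finset.mem_univ i))

end Aux

section Aux2

attribute [local instance] Matrix.linftyOpNormedRing Matrix.linftyOpNormedAlgebra

lemma aux_main {L T : ℕ} (V : Matrix (Fin L) (Fin T) ℂ) (c lam : ℝ) (hc : 0 < c)
    (hlam : 0 < lam) (hsmall : (1 + L * c) * lam ≤ 1 / 2)
    (hC : ∀ i j, ‖((V * Vᴴ - 1 : Matrix (Fin L) (Fin L) ℂ)) i j‖ ≤ c * lam) :
    ∀ i j, ‖((V * (Vᴴ * (V * Vᴴ + (lam : ℂ) • 1)⁻¹) - ((1 : ℂ) - (lam : ℂ)) • 1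
      : Matrix (Fin L) (Fin L) ℂ)) i j‖
      ≤ 2 * (1 + L * c) * lam ^ 2 := by
  haveI : CompleteSpace (Matrix (Fin L) (Fin L) ℂ) := FiniteDimensional.complete ℂ _
  set Cm : Matrix (Fin L) (Fin L) ℂ := V * Vᴴ - 1 with hCm
  have hCn : ‖Cm‖ ≤ L * (c * lam) :=
    linfty_le_of_entries _ (le_of_lt (mul_pos hc hlam)) hC
  set D : Matrix (Fin L) (Fin L) ℂ := Cm + (lam : ℂ) • 1 with hD
  have hMD : V * Vᴴ + (lam : ℂ) • 1 = 1 + D := by rw [hD, hCm]; abel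
  have hlam_norm : ‖((lam : ℂ) • (1 : Matrix (Fin L) (Fin L) ℂ))‖ ≤ lam := by
    rw [norm_smul]
    calc ‖(lam : ℂ)‖ * ‖(1 : Matrix (Fin L) (Fin L) ℂ)‖ ≤ ‖(lam : ℂ)‖ * 1 :=
          mul_le_mul_of_nonneg_left one_norm_le (norm_nonneg _)
      _ = |lam| := by rw [mul_one, Complex.norm_real, Real.norm_eq_abs]
      _ = lam := abs_of_pos hlam
  have hDn : ‖D‖ ≤ (1 + L * c) * lam := by
    calc ‖D‖ ≤ ‖Cm‖ + ‖(lam : ℂ) • (1 : Matrix (Fin L) (Fin L) ℂ)‖ := norm_add_le _ _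
      _ ≤ L * (c * lam) + lam := add_le_add hCn hlam_norm
      _ = (1 + L * c) * lam := by ring
  have hDhalf : ‖D‖ ≤ 1 / 2 := hDn.trans hsmall
  have hDlt : ‖-D‖ < 1 := by rw [norm_neg]; linarith
  set u : (Matrix (Fin L) (Fin L) ℂ)ˣ := Units.oneSub (-D) hDlt with hu
  have huval : (u : Matrix (Fin L) (Fin L) ℂ) = 1 + D := by
    rw [hu, Units.val_oneSub, sub_neg_eq_add]
  set J : Matrix (Fin L) (Fin L) ℂ := ↑u⁻¹ with hJ
  have hinv : (V * Vᴴ + (lam : ℂ) • 1)⁻¹ = J := by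
    rw [hMD, ← huval, Matrix.nonsing_inv_eq_ringInverse, Ring.inverse_unit]
  have hJM : J * (1 + D) = 1 := by rw [← huval, hJ, Units.inv_mul]
  have hMJ : (1 + D) * J = 1 := by rw [← huval, hJ, Units.mul_inv]
  have hJeq : J = 1 - J * D := by
    have h := hJM
    rw [mul_add, mul_one] at h
    exact eq_sub_of_add_eq h
  have hJn : ‖J‖ ≤ 2 := by
    have h1 : ‖J‖ ≤ ‖(1 : Matrix (Fin L) (Fin L) ℂ)‖ + ‖J * D‖ := by
      conv_lhs => rw [hJeq]
      exact norm_sub_le _ _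
    have h2 : ‖J * D‖ ≤ ‖J‖ * ‖D‖ := norm_mul_le _ _
    have h3 : ‖J‖ * ‖D‖ ≤ ‖J‖ * (1 / 2) :=
      mul_le_mul_of_nonneg_left hDhalf (norm_nonneg _)
    have h4 := one_norm_le (L := L)
    nlinarith [norm_nonneg J]
  have hexpr : V * (Vᴴ * (V * Vᴴ + (lam : ℂ) • 1)⁻¹) - ((1 : ℂ) - (lam : ℂ)) • 1
      = (lam : ℂ) • (J * D) := by
    rw [hinv, ← Matrix.mul_assoc]
    have hVV : V * Vᴴ = (1 + D) - (lam : ℂ) • 1 := by rw [hD, hCm]; abel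
    have h1J : (1 : Matrix (Fin L) (Fin L) ℂ) - J = J * D := by
      nth_rewrite 1 [hJeq]
      abel
    rw [hVV, Matrix.sub_mul, hMJ, Matrix.smul_mul, Matrix.one_mul, ← h1J,
      sub_smul, one_smul, smul_sub]
    abel
  intro i j
  calc ‖((V * (Vᴴ * (V * Vᴴ + (lam : ℂ) • 1)⁻¹) - ((1 : ℂ) - (lam : ℂ)) • 1
        : Matrix (Fin L) (Fin L) ℂ)) i j‖
      ≤ ‖V * (Vᴴ * (V * Vᴴ + (lam : ℂ) • 1)⁻¹) - ((1 : ℂ) - (lam : ℂ)) • 1‖ :=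
        entry_le_linfty _ i j
    _ = ‖(lam : ℂ) • (J * D)‖ := by rw [hexpr]
    _ = lam * ‖J * D‖ := by
        rw [norm_smul, Complex.norm_real, Real.norm_eq_abs, abs_of_pos hlam]
    _ ≤ lam * (‖J‖ * ‖D‖) := mul_le_mul_of_nonneg_left (norm_mul_le _ _) hlam.le
    _ ≤ lam * (2 * ((1 + L * c) * lam)) := by
        apply mul_le_mul_of_nonneg_left _ hlam.le
        apply mul_le_mul hJn hDn (norm_nonneg _) (by norm_num)
    _ = 2 * (1 + L * c) * lam ^ 2 := by ring

end Aux2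

attribute [local instance] Matrix.normedAddCommGroup

/-- Low-correlated users: for the RZF precoder `W'(λ) = Vᴴ(VVᴴ + λI)⁻¹`, if the
interference-correlation matrix `C = VVᴴ − I` satisfies `‖C‖ ≤ cλ`, then
`V W'(λ) = (1 − λ)I + O(λ²)`. -/
theorem low_correlated_rzf {L T : ℕ} (V : Matrix (Fin L) (Fin T) ℂ)
    (hV : IsUnit (V * Vᴴ).det) (c : ℝ) (hc : 0 < c) :
    ∃ C' > (0:ℝ), ∃ lam₀ > (0:ℝ), ∀ lam : ℝ, 0 < lam → lam < lam₀ →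
      ‖V * Vᴴ - 1‖ ≤ c * lam →
      ‖V * (Vᴴ * (V * Vᴴ + (lam : ℂ) • 1)⁻¹) - ((1 : ℂ) - (lam : ℂ)) • 1‖
        ≤ C' * lam ^ 2 := by
  have hpos : (0:ℝ) < 1 + L * c := by positivity
  refine ⟨2 * (1 + L * c), by positivity, 1 / (2 * (1 + L * c)), by positivity, ?_⟩
  intro lam hl hl0 hnorm
  have hsmall : (1 + L * c) * lam ≤ 1 / 2 := by
    rw [lt_div_iff₀ (by positivity : (0:ℝ) < 2 * (1 + L * c))] at hl0
    nlinarith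
  have hC : ∀ i j, ‖((V * Vᴴ - 1 : Matrix (Fin L) (Fin L) ℂ)) i j‖ ≤ c * lam :=
    fun i j => (Matrix.norm_entry_le_entrywise_sup_norm _).trans hnorm
  have hbound := aux_main V c lam hc hl hsmall hC
  rw [show (2 * (1 + (L:ℝ) * c)) * lam ^ 2 = 2 * (1 + L * c) * lam ^ 2 by ring]
  exact (Matrix.norm_le_iff (by positivity)).2 hbound
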